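/- arXiv:0912.4023 — 15 statements merged into one kernel-verified Lean document; each statement's English description precedes it below -/
import Mathlib

section
/- Let ⟨E,C⟩ be a configuration structure and define the event structure 𝔈(C) = ⟨E,⊢⟩ by X ⊢ Y iff X ∩ Y = ∅ and X ∪ Y ∈ C. Then 𝔈(C) is pure and its set of left-closed configurations equals C, i.e. L(𝔈(C)) = C. -/
/-- The left-closed configurations of an event structure `⟨E,⊢⟩`. -/
def LeftClosed {E : Type*} (en : Set E → Set E → Prop) : Set (Set E) :=
  {X | ∀ Y ⊆ X, ∃ Z ⊆ X, en Z Y}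

/-- An event structure is pure if `X ⊢ Y` implies `X ∩ Y = ∅`. -/
def PureES {E : Type*} (en : Set E → Set E → Prop) : Prop :=
  ∀ X Y, en X Y → X ∩ Y = ∅

/-- The event structure `𝔈(C)` associated to a configuration structure `⟨E,C⟩`
is pure and its left-closed configurations are exactly `C`. -/
theorem stmt_1 {E : Type*} (C : Set (Set E)) :
    PureES (fun X Y => X ∩ Y = ∅ ∧ X ∪ Y ∈ C) ∧
    LeftClosed (fun X Y => X ∩ Y = ∅ ∧ X ∪ Y ∈ C) = C := by
  constructor
  · intro X Y h; exact h.1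
  · ext X
    constructor
    · intro hX
      obtain ⟨Z, hZX, hZ, hmem⟩ := hX X (subset_refl X)
      have : Z = ∅ := by
        rw [Set.inter_eq_self_of_subset_left hZX] at hZ; exact hZ
      simpa [this] using hmem
    · intro hX Y hYX
      refine ⟨X \ Y, Set.diff_subset, ?_, ?_⟩
      · ext x; simp
      · rw [Set.diff_union_of_subset hYX]; exact hX
end

section
/- Let T be a propositional theory in conjunctive normal form over a set E, i.e. a set of clauses X ⇒ Y with X, Y ⊆ E. Define the event structure 𝔈(T) = ⟨E,⊢_T⟩ by X ⊢_T Y iff for every Z ⊆ E, if the clause Y ⇒ Z belongs to T then X ∩ Z ≠ ∅. Then the left-closed configurations of 𝔈(T) are exactly the models of T: L(𝔈(T)) = M(T). -/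
/-- The models of a propositional theory in conjunctive normal form:
a theory is a set of clauses `(X, Y)`, and `m` is a model of the clause `X ⇒ Y`
if `X ⊆ m` implies `m ∩ Y ≠ ∅`. -/
def Models {E : Type*} (T : Set (Set E × Set E)) : Set (Set E) :=
  {m | ∀ c ∈ T, c.1 ⊆ m → (m ∩ c.2).Nonempty}

/-- For a theory `T` in conjunctive normal form, the left-closed configurations of
the associated event structure `𝔈(T)`, with `X ⊢_T Y` iff every clause `Y ⇒ Z` of `T`
satisfies `X ∩ Z ≠ ∅`, are exactly the models of `T`. -/
theorem stmt_2 {E : Type*} (T : Set (Set E × Set E)) :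
    LeftClosed (fun X Y => ∀ Z : Set E, (Y, Z) ∈ T → (X ∩ Z).Nonempty) = Models T := by
  ext m
  constructor
  · intro h c hc hsub
    obtain ⟨Z, hZ, hen⟩ := h c.1 hsub
    obtain ⟨x, hx, hx2⟩ := hen c.2 (by simpa using hc)
    exact ⟨x, hZ hx, hx2⟩
  · intro h Y hY
    exact ⟨m, le_refl _, fun W hW => h (Y, W) hW hY⟩
end

section
/- For every rooted configuration structure ⟨E,C⟩ (i.e. with ∅ ∈ C) there exists a Petri net N = ⟨S,E,F,I⟩ whose set of transitions is E, which is pure, without arcweights, and a 1-occurrence net, such that the configurations of N are exactly the finite members of C (viewed as subsets of E). -/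
/-- A Petri net `⟨S,T,F,I⟩`: `pre s t = F(s,t)`, `post t s = F(t,s)`,
`init = I` is the initial marking. -/
structure PetriNet (S T : Type) where
  pre : S → T → ℕ
  post : T → S → ℕ
  init : S → ℕ

/-- `•U(s) = Σ_t F(s,t)·U(t)` for a multiset `U` of transitions. -/
noncomputable def preMS {S T : Type} (N : PetriNet S T) (U : T → ℕ) (s : S) : ℕ :=
  ∑ᶠ t, N.pre s t * U t

/-- `U•(s) = Σ_t U(t)·F(t,s)` for a multiset `U` of transitions. -/
noncomputable def postMS {S T : Type} (N : PetriNet S T) (U : T → ℕ) (s : S) : ℕ :=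
  ∑ᶠ t, U t * N.post t s

/-- `M_X = I − •X + X•`, computed in `ℤ`. -/
noncomputable def marking {S T : Type} (N : PetriNet S T) (x : T → ℕ) (s : S) : ℤ :=
  (N.init s : ℤ) - (preMS N x s : ℤ) + (postMS N x s : ℤ)

/-- A (finite) configuration of `N`: a finite multiset `x` of transitions
with `M_x = I − •x + x• ≥ 0`. -/
def IsConfig {S T : Type} (N : PetriNet S T) (x : T → ℕ) : Prop :=
  (Function.support x).Finite ∧ ∀ s, 0 ≤ marking N x s

/-- `N` is pure: no place `s` and transition `t` with `F(s,t) > 0` and `F(t,s) > 0`. -/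
def PurePN {S T : Type} (N : PetriNet S T) : Prop :=
  ∀ s t, ¬(0 < N.pre s t ∧ 0 < N.post t s)

open Classical in
noncomputable def myNet {E : Type} (C : Set (Set E)) :
    PetriNet (E ⊕ {X : Finset E // ↑X ∉ C}) E where
  pre s t := match s with
    | .inl t₀ => if t = t₀ then 1 else 0
    | .inr X => if t ∈ X.1 then 1 else 0
  post t s := match s with
    | .inl _ => 0
    | .inr X => if t ∈ X.1 then 0 else 1
  init s := match s with
    | .inl _ => 1
    | .inr X => X.1.card - 1

open Classical in
lemma pre_inl {E : Type} (C : Set (Set E)) (x : E → ℕ) (t₀ : E) :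
    preMS (myNet C) x (.inl t₀) = x t₀ := by
  unfold preMS
  rw [finsum_eq_single _ t₀]
  · simp [myNet]
  · intro t ht
    simp [myNet, ht]

open Classical in
lemma pre_inr {E : Type} (C : Set (Set E)) (x : E → ℕ) (X : {X : Finset E // ↑X ∉ C}) :
    preMS (myNet C) x (.inr X) = ∑ t ∈ X.1, x t := by
  unfold preMS
  rw [finsum_eq_finset_sum_of_support_subset _ (s := X.1)]
  · exact Finset.sum_congr rfl fun t ht => by simp [myNet, ht]
  · intro t ht
    simp only [Function.mem_support, myNet] at ht
    by_contra h
    rw [Finset.mem_coe] at h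
    simp [h] at ht

lemma post_inl {E : Type} (C : Set (Set E)) (x : E → ℕ) (t₀ : E) :
    postMS (myNet C) x (.inl t₀) = 0 := by
  unfold postMS
  simp [myNet]

open Classical in
lemma post_inr {E : Type} (C : Set (Set E)) (x : E → ℕ)
    (hf : (Function.support x).Finite) (X : {X : Finset E // ↑X ∉ C}) :
    postMS (myNet C) x (.inr X) = ∑ t ∈ hf.toFinset, x t * (if t ∈ X.1 then 0 else 1) := by
  unfold postMS
  rw [finsum_eq_finset_sum_of_support_subset _ (s := hf.toFinset)]
  · rfl
  · intro t ht
    simp only [Function.mem_support, myNet] at ht ⊢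
    simp only [Set.Finite.coe_toFinset]
    intro h
    simp [h] at ht

/-- For every rooted configuration structure `⟨E,C⟩` there is a pure 1-occurrence
Petri net without arcweights, with set of transitions `E`, whose configurations are
exactly the finite members of `C` (viewed as multisets taking values in `{0,1}`). -/
theorem stmt_3 {E : Type} (C : Set (Set E)) (hroot : ∅ ∈ C) :
    ∃ (S : Type) (N : PetriNet S E),
      PurePN N ∧
      (∀ s t, N.pre s t ≤ 1) ∧ (∀ t s, N.post t s ≤ 1) ∧
      (∀ x : E → ℕ, IsConfig N x → ∀ t, x t ≤ 1) ∧
      (∀ x : E → ℕ, IsConfig N x ↔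
        ∃ m ∈ C, m.Finite ∧ x = m.indicator fun _ => 1) := by
  classical
  have key : ∀ x : E → ℕ, IsConfig (myNet C) x → ∀ t, x t ≤ 1 := by
    intro x hx t
    have h := hx.2 (.inl t)
    unfold marking at h
    rw [pre_inl, post_inl] at h
    have hi : (myNet C).init (.inl t) = 1 := rfl
    rw [hi] at h
    have : (x t : ℤ) ≤ 1 := by push_cast at h; linarith
    exact_mod_cast this
  refine ⟨E ⊕ {X : Finset E // ↑X ∉ C}, myNet C, ?_, ?_, ?_, key, ?_⟩
  · rintro (t₀ | X) t ⟨h1, h2⟩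
    · simp [myNet] at h2
    · by_cases h : t ∈ X.1 <;> simp [myNet, h] at h1 h2
  · rintro (t₀ | X) t <;> simp only [myNet] <;> split <;> simp
  · rintro t (t₀ | X) <;> simp only [myNet]
    · simp
    · split <;> simp
  · intro x
    constructor
    · intro hx
      have hx1 := key x hx
      refine ⟨Function.support x, ?_, hx.1, ?_⟩
      · by_contra hmc
        set X : {X : Finset E // ↑X ∉ C} :=
          ⟨hx.1.toFinset, by rwa [Set.Finite.coe_toFinset]⟩ with hXdef
        have h := hx.2 (.inr X)
        unfold marking at h
        rw [pre_inr, post_inr C x hx.1] at h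
        have hpre : ∑ t ∈ X.1, x t = X.1.card := by
          rw [Finset.card_eq_sum_ones]
          refine Finset.sum_congr rfl fun t ht => ?_
          have : t ∈ Function.support x := by
            simpa [hXdef, Set.Finite.mem_toFinset] using ht
          have := hx1 t
          simp only [Function.mem_support] at *
          omega
        have hpost : ∑ t ∈ hx.1.toFinset, x t * (if t ∈ X.1 then 0 else 1) = 0 := by
          refine Finset.sum_eq_zero fun t ht => ?_
          have : t ∈ X.1 := by simpa [hXdef] using ht
          simp [this]
        have hcard : 1 ≤ X.1.card := by
          rcases Finset.eq_empty_or_nonempty X.1 with he | hne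
          · exfalso
            apply X.2
            rw [he]
            simpa using hroot
          · exact Finset.card_pos.mpr hne
        rw [hpre, hpost] at h
        have hinit : (myNet C).init (.inr X) = X.1.card - 1 := rfl
        rw [hinit] at h
        omega
      · funext t
        have := hx1 t
        by_cases h : x t = 0
        · simp [Set.indicator_apply, Function.mem_support, h]
        · simp only [Set.indicator_apply, Function.mem_support]
          rw [if_pos h]
          omega
    · rintro ⟨m, hmC, hfin, rfl⟩
      set x : E → ℕ := m.indicator fun _ => 1 with hxdef
      have hxt : ∀ t, x t = if t ∈ m then 1 else 0 := fun t => Set.indicator_apply _ _ _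
      have hsupp : Function.support x = m := by
        ext t
        simp only [Function.mem_support, hxt t]
        split <;> simp_all
      have hf : (Function.support x).Finite := hsupp ▸ hfin
      refine ⟨hf, ?_⟩
      rintro (t₀ | X)
      · unfold marking
        rw [pre_inl, post_inl]
        have : x t₀ ≤ 1 := by rw [hxt]; split <;> omega
        have hi : (myNet C).init (.inl t₀) = 1 := rfl
        rw [hi]
        push_cast
        omega
      · unfold marking
        rw [pre_inr, post_inr C x hf]
        have hinit : (myNet C).init (.inr X) = X.1.card - 1 := rfl
        rw [hinit]
        have hcard : 1 ≤ X.1.card := by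
          rcases Finset.eq_empty_or_nonempty X.1 with he | hne
          · exfalso; apply X.2; rw [he]; simpa using hroot
          · exact Finset.card_pos.mpr hne
        have hle : ∀ t ∈ X.1, x t ≤ 1 := fun t _ => by rw [hxt]; split <;> omega
        by_cases hA : ∃ a ∈ X.1, a ∉ m
        · obtain ⟨a, haX, ham⟩ := hA
          have hstrict : ∑ t ∈ X.1, x t < ∑ t ∈ X.1, 1 :=
            Finset.sum_lt_sum (fun t ht => hle t ht)
              ⟨a, haX, by rw [hxt]; simp [ham]⟩
          rw [Finset.sum_const, smul_eq_mul, mul_one] at hstrict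
          omega
        · push_neg at hA
          have hXm : m ≠ ↑X.1 := fun h => X.2 (h ▸ hmC)
          have : ∃ a ∈ m, a ∉ X.1 := by
            by_contra hB
            push_neg at hB
            apply hXm
            ext t
            exact ⟨fun ht => hB t ht, fun ht => hA t ht⟩
          obtain ⟨a, ham, haX⟩ := this
          have haF : a ∈ hf.toFinset := by
            rw [Set.Finite.mem_toFinset, hsupp]; exact ham
          have hpost1 : 1 ≤ ∑ t ∈ hf.toFinset, x t * (if t ∈ X.1 then 0 else 1) := by
            have := Finset.single_le_sum
              (f := fun t => x t * (if t ∈ X.1 then 0 else 1))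
              (fun i _ => Nat.zero_le _) haF
            have ha1 : x a * (if a ∈ X.1 then 0 else 1) = 1 := by
              rw [hxt]; simp [ham, haX]
            rw [ha1] at this
            omega
          have hpre : ∑ t ∈ X.1, x t ≤ X.1.card := by
            rw [Finset.card_eq_sum_ones]
            exact Finset.sum_le_sum hle
          omega
end

section
/- Let ⟨E,C⟩ be a configuration structure, let x ∈ R(C) be a reachable configuration and let Y ⊆ E. Then x →_{R(C)} Y (the step transition computed in the configuration structure ⟨E,R(C)⟩) holds if and only if x →_C Y holds. -/
/-- The step transition relation of a configuration structure `⟨E,C⟩`: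
`x →_C y` iff `x ⊆ y` and every `Z` with `x ⊆ Z ⊆ y` lies in `C`. -/
def Step {E : Type*} (C : Set (Set E)) (x y : Set E) : Prop :=
  x ⊆ y ∧ ∀ Z, x ⊆ Z → Z ⊆ y → Z ∈ C

/-- The reachable configurations of `⟨E,C⟩`: configurations `x ∈ C` for which there
is a finite chain `∅ = x₀ →_C x₁ →_C ⋯ →_C xₙ = x`. -/
def Reach {E : Type*} (C : Set (Set E)) : Set (Set E) :=
  {x | x ∈ C ∧ ∃ (n : ℕ) (f : ℕ → Set E), f 0 = ∅ ∧ f n = x ∧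
        ∀ i < n, Step C (f i) (f (i + 1))}

/-- The secured configurations of `⟨E,C⟩`: the sets `X = ⋃_{i∈ℕ} x_i` for an infinite
chain `∅ = x₀ →_C x₁ →_C x₂ →_C ⋯` of configurations. -/
def Secured {E : Type*} (C : Set (Set E)) : Set (Set E) :=
  {X | ∃ f : ℕ → Set E, f 0 = ∅ ∧ (∀ i, Step C (f i) (f (i + 1))) ∧ X = ⋃ i, f i}

/-- The finite members of a family of sets. -/
def FinPart {E : Type*} (C : Set (Set E)) : Set (Set E) :=
  {x ∈ C | x.Finite}

/-- For a reachable configuration `x` of `⟨E,C⟩` and any `Y ⊆ E`, the step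
`x →_{R(C)} Y` computed in `⟨E,R(C)⟩` holds iff `x →_C Y` holds. -/
theorem stmt_6 {E : Type*} (C : Set (Set E)) {x : Set E} (hx : x ∈ Reach C)
    (Y : Set E) : Step (Reach C) x Y ↔ Step C x Y := by
  constructor
  · rintro ⟨hxy, h⟩
    exact ⟨hxy, fun Z h1 h2 => (h Z h1 h2).1⟩
  · rintro ⟨hxy, h⟩
    refine ⟨hxy, fun Z h1 h2 => ?_⟩
    obtain ⟨hxC, n, f, hf0, hfn, hstep⟩ := hx
    refine ⟨h Z h1 h2, n + 1, fun i => if i ≤ n then f i else Z, by simp [hf0], by simp, ?_⟩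
    intro i hi
    rcases lt_or_eq_of_le (Nat.lt_succ_iff.mp hi) with hlt | heq
    · simpa [Nat.le_of_lt hlt, Nat.succ_le_of_lt hlt] using hstep i hlt
    · subst heq
      simp only [le_refl, if_pos, Nat.add_one, Nat.not_succ_le_self, if_neg, ite_false]
      rw [hfn]
      exact ⟨h1, fun W hw1 hw2 => h W hw1 (hw2.trans h2)⟩
end

section
/- Let ⟨E,C⟩ be a configuration structure. Then S(C) = S(R(C)), i.e. the secured configurations of ⟨E,C⟩ coincide with the secured configurations of its reachable part ⟨E,R(C)⟩, and moreover R(C) ⊆ R(S(C)), i.e. every reachable configuration of ⟨E,C⟩ is a reachable configuration of the configuration structure ⟨E,S(C)⟩. -/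
lemma sub_of_le {E : Type*} {f : ℕ → Set E} :
    ∀ {n : ℕ}, (∀ i < n, f i ⊆ f (i + 1)) → ∀ i ≤ n, f i ⊆ f n := by
  intro n
  induction n with
  | zero =>
    intro _ i hi
    have : i = 0 := Nat.le_zero.mp hi
    subst this; exact subset_rfl
  | succ n ih =>
    intro h i hi
    rcases Nat.lt_or_ge i (n + 1) with hlt | hge
    · have hi' : i ≤ n := Nat.lt_succ_iff.mp hlt
      exact (ih (fun j hj => h j (Nat.lt_succ_of_lt hj)) i hi').trans
        (h n (Nat.lt_succ_self n))
    · have : i = n + 1 := le_antisymm hi hge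
      subst this; exact subset_rfl

lemma mid_reach {E : Type*} {C : Set (Set E)} {f : ℕ → Set E} {n i : ℕ}
    (h0 : f 0 = ∅) (hstep : ∀ j < n, Step C (f j) (f (j + 1)))
    (hi : i < n) {Z : Set E} (h1 : f i ⊆ Z) (h2 : Z ⊆ f (i + 1)) :
    Z ∈ Reach C := by
  refine ⟨(hstep i hi).2 Z h1 h2, i + 1, fun j => if j ≤ i then f j else Z, ?_, ?_, ?_⟩
  · simpa using h0
  · simp
  · intro j hj
    show Step C (if j ≤ i then f j else Z) (if j + 1 ≤ i then f (j + 1) else Z)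
    rcases Nat.lt_or_ge j i with hji | hji
    · rw [if_pos (Nat.le_of_lt hji), if_pos (show j + 1 ≤ i by omega)]
      exact hstep j (Nat.lt_trans hji hi)
    · have hji' : j = i := by omega
      subst hji'
      rw [if_pos (le_refl j), if_neg (by omega)]
      exact ⟨h1, fun W hW1 hW2 => (hstep j hi).2 W hW1 (hW2.trans h2)⟩

lemma reach_subset_secured {E : Type*} (C : Set (Set E)) :
    Reach C ⊆ Secured C := by
  rintro x ⟨hxC, n, f, h0, hn, hstep⟩
  refine ⟨fun i => f (min i n), by simpa using h0, ?_, ?_⟩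
  · intro i
    show Step C (f (min i n)) (f (min (i + 1) n))
    rcases Nat.lt_or_ge i n with hi | hi
    · rw [min_eq_left (Nat.le_of_lt hi), min_eq_left hi]
      exact hstep i hi
    · rw [min_eq_right hi, min_eq_right (Nat.le_succ_of_le hi)]
      exact ⟨subset_rfl, fun Z h1 h2 => by
        have : Z = f n := subset_antisymm h2 h1
        rw [this, hn]; exact hxC⟩
  · apply subset_antisymm
    · have : x = f (min n n) := by simp [hn]
      rw [this]; exact Set.subset_iUnion (fun i => f (min i n)) n
    · apply Set.iUnion_subset
      intro i
      have := sub_of_le (f := f) (fun j hj => (hstep j hj).1) (min i n) (min_le_right i n)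
      rw [hn] at this; exact this

/-- `S(C) = S(R(C))` and `R(C) ⊆ R(S(C))`. -/
theorem stmt_7 {E : Type*} (C : Set (Set E)) :
    Secured C = Secured (Reach C) ∧ Reach C ⊆ Reach (Secured C) := by
  constructor
  · apply subset_antisymm
    · rintro X ⟨f, h0, hstep, hX⟩
      refine ⟨f, h0, fun i => ⟨(hstep i).1, fun Z h1 h2 => ?_⟩, hX⟩
      exact mid_reach h0 (fun j _ => hstep j) (Nat.lt_succ_self i) h1 h2
    · rintro X ⟨f, h0, hstep, hX⟩
      exact ⟨f, h0, fun i => ⟨(hstep i).1,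
        fun Z h1 h2 => ((hstep i).2 Z h1 h2).1⟩, hX⟩
  · rintro x hx
    obtain ⟨hxC, n, f, h0, hn, hstep⟩ := hx
    refine ⟨reach_subset_secured C ⟨hxC, n, f, h0, hn, hstep⟩, n, f, h0, hn, ?_⟩
    intro i hi
    exact ⟨(hstep i hi).1, fun Z h1 h2 =>
      reach_subset_secured C (mid_reach h0 hstep hi h1 h2)⟩
end

section
/- Let ⟨E,C⟩ and ⟨E,D⟩ be SR-secure configuration structures over the same set of events E. Then R(C) = R(D) if and only if S(C) = S(D). -/
lemma step_mono' {E : Type*} {C D : Set (Set E)} (h : C ⊆ D) {x y : Set E} :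
    Step C x y → Step D x y := fun ⟨h1, h2⟩ => ⟨h1, fun Z a b => h (h2 Z a b)⟩

lemma secured_reach' {E : Type*} (C : Set (Set E)) : Secured (Reach C) = Secured C := by
  ext X
  constructor
  · rintro ⟨f, h0, hs, rfl⟩
    exact ⟨f, h0, fun i => step_mono' (fun x hx => hx.1) (hs i), rfl⟩
  · rintro ⟨f, h0, hs, rfl⟩
    refine ⟨f, h0, fun i => ⟨(hs i).1, fun Z hZ1 hZ2 => ?_⟩, rfl⟩
    refine ⟨(hs i).2 Z hZ1 hZ2, i + 1, fun j => if j ≤ i then f j else Z, ?_, ?_, ?_⟩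
    · simp [h0]
    · simp
    · intro j hj
      rcases lt_or_eq_of_le (Nat.lt_succ_iff.mp hj) with hji | rfl
      · have h1 : j ≤ i := Nat.le_of_lt hji
        have h2 : j + 1 ≤ i := hji
        simpa [h1, h2] using hs j
      · have h1 : ¬ (j + 1 ≤ j) := by omega
        simp only [le_refl, if_pos, h1, if_neg, not_false_iff]
        exact ⟨hZ1, fun Z' a b => (hs j).2 Z' a (b.trans hZ2)⟩

/-- For SR-secure configuration structures (`R(S(C)) = R(C)`) over the same events,
`R(C) = R(D)` iff `S(C) = S(D)`. -/
theorem stmt_8 {E : Type*} (C D : Set (Set E))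
    (hC : Reach (Secured C) = Reach C) (hD : Reach (Secured D) = Reach D) :
    Reach C = Reach D ↔ Secured C = Secured D := by
  constructor
  · intro h
    rw [← secured_reach' C, ← secured_reach' D, h]
  · intro h
    rw [← hC, ← hD, h]
end

section
/- Let ⟨E,C⟩ be a configuration structure. Then the finite secured configurations coincide with the finite reachable configurations: F(S(C)) = F(R(C)), where F(D) denotes the set of finite members of D. -/
/-- The finite secured configurations coincide with the finite reachable ones:
`F(S(C)) = F(R(C))`. -/
theorem stmt_9 {E : Type*} (C : Set (Set E)) :
    FinPart (Secured C) = FinPart (Reach C) := by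
  classical
  ext X
  constructor
  · rintro ⟨⟨f, hf0, hstep, hX⟩, hfin⟩
    have hmono : Monotone f := monotone_nat_of_le_succ fun i => (hstep i).1
    -- find n with f n = X
    have hsub : ∀ i, f i ⊆ X := fun i => hX ▸ Set.subset_iUnion f i
    set idx : E → ℕ := fun e => if h : ∃ i, e ∈ f i then h.choose else 0 with hidx
    have hmemidx : ∀ e ∈ X, e ∈ f (idx e) := by
      intro e he
      rw [hX] at he
      obtain ⟨i, hi⟩ := Set.mem_iUnion.mp he
      have h : ∃ i, e ∈ f i := ⟨i, hi⟩
      simp only [hidx, dif_pos h]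
      exact h.choose_spec
    obtain ⟨s, hs⟩ := hfin.exists_finset_coe
    set n := s.sup idx with hn
    have hXn : X = f n := by
      apply Set.Subset.antisymm _ (hsub n)
      intro e he
      have : idx e ≤ n := by
        apply Finset.le_sup
        rw [← Finset.mem_coe, hs]; exact he
      exact hmono this (hmemidx e he)
    have hXC : X ∈ C := by
      rw [hXn]
      exact (hstep n).2 (f n) subset_rfl (hstep n).1
    refine ⟨⟨hXC, n, f, hf0, hXn.symm, fun i _ => hstep i⟩, hfin⟩
  · rintro ⟨⟨hXC, n, f, hf0, hfn, hstep⟩, hfin⟩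
    refine ⟨⟨fun i => f (min i n), by simpa using hf0, ?_, ?_⟩, hfin⟩
    · intro i
      show Step C (f (min i n)) (f (min (i + 1) n))
      rcases lt_or_ge i n with h | h
      · have h1 : min i n = i := min_eq_left h.le
        have h2 : min (i + 1) n = i + 1 := min_eq_left h
        rw [h1, h2]; exact hstep i h
      · have h1 : min i n = n := min_eq_right h
        have h2 : min (i + 1) n = n := min_eq_right (h.trans i.le_succ)
        rw [h1, h2, hfn]
        exact ⟨subset_rfl, fun Z h1 h2 => (Set.Subset.antisymm h2 h1) ▸ hXC⟩
    · have key : ∀ m, m ≤ n → ∀ j ≤ m, f j ⊆ f m := by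
        intro m
        induction m with
        | zero => intro _ j hj; simp [Nat.le_zero.mp hj]
        | succ m ih =>
          intro hm j hj
          rcases Nat.lt_or_ge j (m + 1) with h | h
          · exact (ih (Nat.le_of_succ_le hm) j (Nat.lt_succ_iff.mp h)).trans
              (hstep m hm).1
          · rw [le_antisymm hj h]
      apply Set.Subset.antisymm
      · rw [← hfn]
        exact (min_self n ▸ Set.subset_iUnion (fun i => f (min i n)) n :)
      · apply Set.iUnion_subset
        intro i
        rw [← hfn]
        exact key n le_rfl (min i n) (min_le_right i n)
end

section
/- For every event structure E = ⟨E,⊢⟩ there is a pure event structure E_L with the same left-closed configurations, L(E_L) = L(E), and a pure event structure E_R with the same reachable configurations, R(E_R) = R(E). -/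
/-- The reachable configurations `R(E)` of an event structure: the unions
`⋃_{i≤n} X_i` of stepwise securings `X₀ = ∅`, with `X_i ⊆ X_{i+1}` and
`∀ Y ⊆ X_{i+1} ∃ Z ⊆ X_i, Z ⊢ Y` for all `i < n`. -/
def ESReach {E : Type*} (en : Set E → Set E → Prop) : Set (Set E) :=
  {X | ∃ (n : ℕ) (f : ℕ → Set E), f 0 = ∅ ∧ X = ⋃ i ≤ n, f i ∧
        ∀ i < n, f i ⊆ f (i + 1) ∧ ∀ Y ⊆ f (i + 1), ∃ Z ⊆ f i, en Z Y}

/-- The secured configurations `S(E)` of an event structure: the unions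
`⋃_{i∈ℕ} X_i` of infinite stepwise securings. -/
def ESSecured {E : Type*} (en : Set E → Set E → Prop) : Set (Set E) :=
  {X | ∃ f : ℕ → Set E, f 0 = ∅ ∧ X = ⋃ i, f i ∧
        ∀ i, f i ⊆ f (i + 1) ∧ ∀ Y ⊆ f (i + 1), ∃ Z ⊆ f i, en Z Y}

/-- The finite reachable configurations `R_f(E)`: the sets `{e₁,…,eₙ}` admitting an
eventwise securing, i.e. for every `i ≤ n` and `Y ⊆ {e₁,…,e_i}` there is
`Z ⊆ {e₁,…,e_{i-1}}` with `Z ⊢ Y`. -/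
def ESRf {E : Type*} (en : Set E → Set E → Prop) : Set (Set E) :=
  {X | ∃ (n : ℕ) (g : Fin n → E), X = Set.range g ∧
        ∀ i : Fin n, ∀ Y ⊆ g '' {j | j ≤ i}, ∃ Z ⊆ g '' {j | j < i}, en Z Y}

/-- `S_f(E)` extends `R_f(E)` with the infinite sets `{e₁,e₂,…}` admitting an
infinite eventwise securing. -/
def ESSf {E : Type*} (en : Set E → Set E → Prop) : Set (Set E) :=
  ESRf en ∪
    {X | X.Infinite ∧ ∃ g : ℕ → E, X = Set.range g ∧
          ∀ i : ℕ, ∀ Y ⊆ g '' {j | j ≤ i}, ∃ Z ⊆ g '' {j | j < i}, en Z Y}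

lemma aux_chain_le {E : Type*} {f : ℕ → Set E} {n : ℕ} (h : ∀ i < n, f i ⊆ f (i + 1)) :
    ∀ i ≤ n, f i ⊆ f n := by
  induction n with
  | zero => intro i hi; simp_all
  | succ n ih =>
    intro i hi
    rcases Nat.lt_succ_iff_lt_or_eq.mp (Nat.lt_succ_of_le hi) with h' | h'
    · exact (ih (fun j hj => h j (hj.trans (Nat.lt_succ_self n))) i (Nat.lt_succ_iff.mp h')).trans (h n (Nat.lt_succ_self n))
    · subst h'; rfl

lemma aux_union_eq {E : Type*} {f : ℕ → Set E} {n : ℕ} (h : ∀ i < n, f i ⊆ f (i + 1)) :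
    (⋃ i ≤ n, f i) = f n := by
  apply subset_antisymm
  · simp only [Set.iUnion_subset_iff]
    exact fun i hi => aux_chain_le h i hi
  · exact Set.subset_biUnion_of_mem (le_refl n)

lemma aux_empty_reach {E : Type*} (en : Set E → Set E → Prop) : (∅ : Set E) ∈ ESReach en := by
  refine ⟨0, fun _ => ∅, rfl, ?_, by simp⟩
  simp

/-- For every event structure there are pure event structures `E_L` and `E_R` with
the same left-closed, respectively the same reachable, configurations. -/
theorem stmt_12 {E : Type*} (en : Set E → Set E → Prop) :
    (∃ enL : Set E → Set E → Prop, PureES enL ∧ LeftClosed enL = LeftClosed en) ∧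
    (∃ enR : Set E → Set E → Prop, PureES enR ∧ ESReach enR = ESReach en) := by
  constructor
  · refine ⟨fun Z Y => Z ∩ Y = ∅ ∧ ∃ W ⊆ Z ∪ Y, en W Y, fun X Y h => h.1, ?_⟩
    ext X
    simp only [LeftClosed, Set.mem_setOf_eq]
    constructor
    · intro h Y hY
      obtain ⟨Z, hZ, _, W, hW, hWen⟩ := h Y hY
      exact ⟨W, hW.trans (Set.union_subset hZ hY), hWen⟩
    · intro h Y hY
      obtain ⟨Z, hZ, hZen⟩ := h Y hY
      refine ⟨Z \ Y, Set.diff_subset.trans hZ, ?_, Z, ?_, hZen⟩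
      · ext x; simp
      · intro x hx
        by_cases hxY : x ∈ Y
        · exact Or.inr hxY
        · exact Or.inl ⟨hx, hxY⟩
  · refine ⟨fun Z Y => Z ∩ Y = ∅ ∧ Z ∪ Y ∈ ESReach en, fun X Y h => h.1, ?_⟩
    ext X
    constructor
    · rintro ⟨n, f, hf0, hX, hstep⟩
      have hmono : ∀ i < n, f i ⊆ f (i + 1) := fun i hi => (hstep i hi).1
      have hXn : X = f n := by rw [hX, aux_union_eq hmono]
      rcases Nat.eq_zero_or_pos n with rfl | hn
      · rw [hXn, hf0]; exact aux_empty_reach en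
      · obtain ⟨m, rfl⟩ := Nat.exists_eq_succ_of_ne_zero hn.ne'
        obtain ⟨Z, hZ, hdisj, hmem⟩ := (hstep m (Nat.lt_succ_self m)).2 (f (m + 1)) le_rfl
        have hZsub : Z ⊆ f (m + 1) := hZ.trans (hmono m (Nat.lt_succ_self m))
        have : Z = ∅ := by
          ext x; simp only [Set.mem_empty_iff_false, iff_false]
          intro hx
          have : x ∈ Z ∩ f (m + 1) := ⟨hx, hZsub hx⟩
          rw [hdisj] at this; exact this
        rw [hXn]
        simpa [this] using hmem
    · rintro ⟨n, f, hf0, hX, hstep⟩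
      have hmono : ∀ i < n, f i ⊆ f (i + 1) := fun i hi => (hstep i hi).1
      refine ⟨n, f, hf0, hX, fun i hi => ⟨hmono i hi, fun Y hY => ?_⟩⟩
      refine ⟨f i \ Y, Set.diff_subset, ?_, ?_⟩
      · ext x; simp
      · have hfiY : f i \ Y ∪ Y = f i ∪ Y := Set.diff_union_self
        rw [hfiY]
        -- f i ∪ Y ∈ ESReach en via chain of length i+1
        refine ⟨i + 1, fun j => if j ≤ i then f j else f i ∪ Y, by simp [hf0], ?_, ?_⟩
        · rw [aux_union_eq]
          · simp
          · intro j hj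
            rcases Nat.lt_succ_iff_lt_or_eq.mp hj with h' | h'
            · rw [if_pos (Nat.le_of_lt h'), if_pos (Nat.succ_le_of_lt h')]
              exact hmono j (h'.trans hi)
            · subst h'
              rw [if_pos le_rfl, if_neg (by omega)]
              exact Set.subset_union_left
        · intro j hj
          rcases Nat.lt_succ_iff_lt_or_eq.mp hj with h' | h'
          · dsimp only
            rw [if_pos (Nat.le_of_lt h'), if_pos (Nat.succ_le_of_lt h')]
            exact ⟨hmono j (h'.trans hi), (hstep j (h'.trans hi)).2⟩
          · subst h'
            dsimp only
            rw [if_pos le_rfl, if_neg (by omega)]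
            refine ⟨Set.subset_union_left, fun Y' hY' => ?_⟩
            have : Y' ⊆ f (j + 1) :=
              hY'.trans (Set.union_subset (hmono j hi) hY)
            exact (hstep j hi).2 Y' this
end

section
/- Let ⟨E,⊢⟩ be an event structure with finite conflict, i.e. ∅ ⊢ X for every infinite X ⊆ E. Then every secured configuration is left-closed: S(E) ⊆ L(E). -/
/-- If an event structure has finite conflict (`∅ ⊢ X` for every infinite `X`),
then every secured configuration is left-closed: `S(E) ⊆ L(E)`. -/
theorem stmt_13 {E : Type*} (en : Set E → Set E → Prop)
    (hfc : ∀ X : Set E, X.Infinite → en ∅ X) :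
    ESSecured en ⊆ LeftClosed en := by
  rintro X ⟨f, hf0, rfl, hstep⟩ Y hY
  by_cases hfin : Y.Finite
  · -- finite Y is contained in some f i
    have hmono : Monotone f := monotone_nat_of_le_succ fun i => (hstep i).1
    obtain ⟨i, hi⟩ : ∃ i, Y ⊆ f i := by
      have := hfin.fintype
      classical
      obtain ⟨t, ht⟩ := Set.Finite.exists_finset_coe hfin
      by_cases hYe : Y = ∅
      · exact ⟨0, by simp [hYe]⟩
      · have : ∀ y ∈ Y, ∃ i, y ∈ f i := by
          intro y hy
          have := hY hy
          simpa using this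
        choose g hg using this
        obtain ⟨y0, hy0⟩ := Set.nonempty_iff_ne_empty.2 hYe
        have : ∃ N, ∀ y (hy : y ∈ Y), g y hy ≤ N := by
          classical
          refine ⟨t.sup (fun y => if hy : y ∈ Y then g y hy else 0), ?_⟩
          intro y hy
          have hyt : y ∈ t := by rw [← ht] at hy; exact_mod_cast hy
          have := Finset.le_sup (f := fun y => if hy : y ∈ Y then g y hy else 0) hyt
          simpa [hy] using this
        obtain ⟨N, hN⟩ := this
        exact ⟨N, fun y hy => hmono (hN y hy) (hg y hy)⟩
    obtain ⟨Z, hZ, hen⟩ := (hstep i).2 Y (hi.trans (hstep i).1)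
    exact ⟨Z, hZ.trans (Set.subset_iUnion f i), hen⟩
  · exact ⟨∅, Set.empty_subset _, hfc Y hfin⟩
end

section
/- Let E = ⟨E,⊢⟩ be an event structure. (1) If E is singular, then L(E) is closed under bounded unions. (2) If E is conjunctive, then L(E) is closed under nonempty intersections. (3) If E is locally conjunctive, then L(E) is closed under bounded nonempty intersections. (4) If E has finite conflict, then the configuration structure ⟨E,L(E)⟩ has finite conflict. (5) If E has binary conflict, then ⟨E,L(E)⟩ has binary conflict. -/
/-- A set of events is consistent (in an event structure) if each of its subsets is
enabled by some set: `Con(X)` iff `∀ Y ⊆ X ∃ Z, Z ⊢ Y`. -/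
def ESCon {E : Type*} (en : Set E → Set E → Prop) (X : Set E) : Prop :=
  ∀ Y ⊆ X, ∃ Z, en Z Y

/-- Singular: `X ⊢ Y` implies `X = ∅` or `|Y| = 1`. -/
def Singular {E : Type*} (en : Set E → Set E → Prop) : Prop :=
  ∀ X Y, en X Y → X = ∅ ∨ ∃ e, Y = {e}

/-- Conjunctive: if `X_i ⊢ Y` for all `i` in a nonempty index set, then `⋂ X_i ⊢ Y`. -/
def Conjunctive {E : Type*} (en : Set E → Set E → Prop) : Prop :=
  ∀ (A : Set (Set E)) (Y : Set E), A.Nonempty → (∀ X ∈ A, en X Y) → en (⋂₀ A) Y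

/-- Locally conjunctive: if `X_i ⊢ Y` for all `i` in a nonempty index set and
`Con(⋃ X_i ∪ Y)`, then `⋂ X_i ⊢ Y`. -/
def LocallyConjunctive {E : Type*} (en : Set E → Set E → Prop) : Prop :=
  ∀ (A : Set (Set E)) (Y : Set E), A.Nonempty → (∀ X ∈ A, en X Y) →
    ESCon en (⋃₀ A ∪ Y) → en (⋂₀ A) Y

/-- Finite conflict (event structures): `∅ ⊢ X` for every infinite `X`. -/
def ESFiniteConflict {E : Type*} (en : Set E → Set E → Prop) : Prop :=
  ∀ X : Set E, X.Infinite → en ∅ X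

/-- Binary conflict (event structures): `∅ ⊢ X` whenever `|X| > 2`. -/
def ESBinaryConflict {E : Type*} (en : Set E → Set E → Prop) : Prop :=
  ∀ X : Set E, 2 < X.encard → en ∅ X

/-- A set of events is consistent (in a configuration structure) if it is contained
in some configuration. -/
def Consistent {E : Type*} (C : Set (Set E)) (X : Set E) : Prop :=
  ∃ z ∈ C, X ⊆ z

/-- Finitely consistent: every finite subset is consistent. -/
def FinitelyConsistent {E : Type*} (C : Set (Set E)) (X : Set E) : Prop :=
  ∀ Y ⊆ X, Y.Finite → Consistent C Y

/-- Pairwise consistent: every subset of at most 2 elements is consistent. -/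
def PairwiseConsistent {E : Type*} (C : Set (Set E)) (X : Set E) : Prop :=
  ∀ Y ⊆ X, Y.encard ≤ 2 → Consistent C Y

/-- Rooted: `∅ ∈ C`. -/
def Rooted {E : Type*} (C : Set (Set E)) : Prop := ∅ ∈ C

/-- Closed under bounded unions: if `A ⊆ C` and `⋃A` is consistent then `⋃A ∈ C`. -/
def ClosedBoundedUnions {E : Type*} (C : Set (Set E)) : Prop :=
  ∀ A ⊆ C, Consistent C (⋃₀ A) → ⋃₀ A ∈ C

/-- Closed under nonempty intersections. -/
def ClosedNonemptyInters {E : Type*} (C : Set (Set E)) : Prop :=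
  ∀ A ⊆ C, A.Nonempty → ⋂₀ A ∈ C

/-- Closed under bounded nonempty intersections. -/
def ClosedBoundedNonemptyInters {E : Type*} (C : Set (Set E)) : Prop :=
  ∀ A ⊆ C, A.Nonempty → Consistent C (⋃₀ A) → ⋂₀ A ∈ C

/-- Finite conflict (configuration structures): `X ∈ C` whenever every finite
`Y ⊆ X` satisfies `Y ⊆ z ⊆ X` for some `z ∈ C`. -/
def CSFiniteConflict {E : Type*} (C : Set (Set E)) : Prop :=
  ∀ X : Set E, (∀ Y ⊆ X, Y.Finite → ∃ z ∈ C, Y ⊆ z ∧ z ⊆ X) → X ∈ C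

/-- Binary conflict (configuration structures): `X ∈ C` whenever every `Y ⊆ X` with
`|Y| ≤ 2` satisfies `Y ⊆ z ⊆ X` for some `z ∈ C`. -/
def CSBinaryConflict {E : Type*} (C : Set (Set E)) : Prop :=
  ∀ X : Set E, (∀ Y ⊆ X, Y.encard ≤ 2 → ∃ z ∈ C, Y ⊆ z ∧ z ⊆ X) → X ∈ C

/-- Closed under finitely consistent unions. -/
def ClosedFinConsUnions {E : Type*} (C : Set (Set E)) : Prop :=
  ∀ A ⊆ C, FinitelyConsistent C (⋃₀ A) → ⋃₀ A ∈ C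

/-- Closed under pairwise consistent unions. -/
def ClosedPairwiseConsUnions {E : Type*} (C : Set (Set E)) : Prop :=
  ∀ A ⊆ C, PairwiseConsistent C (⋃₀ A) → ⋃₀ A ∈ C

/-- Closed under finitely consistent nonempty intersections. -/
def ClosedFinConsNonemptyInters {E : Type*} (C : Set (Set E)) : Prop :=
  ∀ A ⊆ C, A.Nonempty → FinitelyConsistent C (⋃₀ A) → ⋂₀ A ∈ C

/-- Closed under pairwise consistent nonempty intersections. -/
def ClosedPairwiseConsNonemptyInters {E : Type*} (C : Set (Set E)) : Prop :=
  ∀ A ⊆ C, A.Nonempty → PairwiseConsistent C (⋃₀ A) → ⋂₀ A ∈ C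

/-- Closed under directed unions: for every nonempty `A ⊆ C` such that any two
members of `A` are contained in a member of `A`, the union `⋃A` is in `C`. -/
def ClosedDirectedUnions {E : Type*} (C : Set (Set E)) : Prop :=
  ∀ A ⊆ C, A.Nonempty → (∀ x ∈ A, ∀ y ∈ A, ∃ z ∈ A, x ∪ y ⊆ z) → ⋃₀ A ∈ C

/-- Weakly coherent: for every `A ⊆ C` such that any two members of `A` are
contained in a configuration `z ⊆ ⋃A`, the union `⋃A` is in `C`. -/
def WeaklyCoherent {E : Type*} (C : Set (Set E)) : Prop :=
  ∀ A ⊆ C, (∀ x ∈ A, ∀ y ∈ A, ∃ z ∈ C, x ∪ y ⊆ z ∧ z ⊆ ⋃₀ A) → ⋃₀ A ∈ C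

/-- Closed under finitely compatible unions (finitely complete): for every `A ⊆ C`
such that `⋃F` is consistent for each finite `F ⊆ A`, the union `⋃A` is in `C`. -/
def ClosedFinCompatUnions {E : Type*} (C : Set (Set E)) : Prop :=
  ∀ A ⊆ C, (∀ F ⊆ A, F.Finite → Consistent C (⋃₀ F)) → ⋃₀ A ∈ C

/-- Coherent: for every `A ⊆ C` with `x ∪ y` consistent for all `x, y ∈ A`,
the union `⋃A` is in `C`. -/
def Coherent {E : Type*} (C : Set (Set E)) : Prop :=
  ∀ A ⊆ C, (∀ x ∈ A, ∀ y ∈ A, Consistent C (x ∪ y)) → ⋃₀ A ∈ C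

/-- Properties of an event structure yield the corresponding closure properties of
its left-closed configuration structure. -/
theorem stmt_14 {E : Type*} (en : Set E → Set E → Prop) :
    (Singular en → ClosedBoundedUnions (LeftClosed en)) ∧
    (Conjunctive en → ClosedNonemptyInters (LeftClosed en)) ∧
    (LocallyConjunctive en → ClosedBoundedNonemptyInters (LeftClosed en)) ∧
    (ESFiniteConflict en → CSFiniteConflict (LeftClosed en)) ∧
    (ESBinaryConflict en → CSBinaryConflict (LeftClosed en)) := by
  refine ⟨?_, ?_, ?_, ?_, ?_⟩
  · -- singular
    intro hs A hA ⟨z, hz, hsub⟩ Y hY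
    obtain ⟨Z, hZz, hZY⟩ := hz Y (hY.trans hsub)
    rcases hs Z Y hZY with rfl | ⟨e, rfl⟩
    · exact ⟨∅, Set.empty_subset _, hZY⟩
    · obtain ⟨X, hXA, heX⟩ := hY (Set.mem_singleton e)
      obtain ⟨Z', hZ'X, hen⟩ := hA hXA {e} (Set.singleton_subset_iff.mpr heX)
      exact ⟨Z', hZ'X.trans (Set.subset_sUnion_of_mem hXA), hen⟩
  · -- conjunctive
    intro hc A hA hne Y hY
    choose f hf1 hf2 using fun (X : A) => hA X.2 Y (hY.trans (Set.sInter_subset_of_mem X.2))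
    refine ⟨⋂₀ (Set.range f), ?_, ?_⟩
    · intro e he
      rw [Set.mem_sInter]
      intro X hX
      exact hf1 ⟨X, hX⟩ (Set.mem_sInter.mp he _ ⟨⟨X, hX⟩, rfl⟩)
    · have : Nonempty A := hne.to_subtype
      apply hc _ _ (Set.range_nonempty f)
      rintro _ ⟨X, rfl⟩
      exact hf2 X
  · -- locally conjunctive
    intro hc A hA hne ⟨z, hz, hsub⟩ Y hY
    choose f hf1 hf2 using fun (X : A) => hA X.2 Y (hY.trans (Set.sInter_subset_of_mem X.2))
    refine ⟨⋂₀ (Set.range f), ?_, ?_⟩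
    · intro e he
      rw [Set.mem_sInter]
      intro X hX
      exact hf1 ⟨X, hX⟩ (Set.mem_sInter.mp he _ ⟨⟨X, hX⟩, rfl⟩)
    · have : Nonempty A := hne.to_subtype
      have hU : ⋃₀ Set.range f ∪ Y ⊆ z := by
        apply Set.union_subset
        · refine (Set.sUnion_subset ?_).trans hsub
          rintro _ ⟨X, rfl⟩
          exact (hf1 X).trans (Set.subset_sUnion_of_mem X.2)
        · obtain ⟨X0, hX0⟩ := hne
          exact (hY.trans (Set.sInter_subset_of_mem hX0)).trans
            ((Set.subset_sUnion_of_mem hX0).trans hsub)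
      apply hc _ _ (Set.range_nonempty f)
      · rintro _ ⟨X, rfl⟩
        exact hf2 X
      · intro W hW
        obtain ⟨Z, _, hZW⟩ := hz W (hW.trans hU)
        exact ⟨Z, hZW⟩
  · -- finite conflict
    intro hf X hX Y hY
    rcases Set.finite_or_infinite Y with hfin | hinf
    · obtain ⟨z, hz, hYz, hzX⟩ := hX Y hY hfin
      obtain ⟨Z, hZz, hen⟩ := hz Y hYz
      exact ⟨Z, hZz.trans hzX, hen⟩
    · exact ⟨∅, Set.empty_subset _, hf Y hinf⟩
  · -- binary conflict
    intro hb X hX Y hY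
    rcases le_or_gt Y.encard 2 with hle | hlt
    · obtain ⟨z, hz, hYz, hzX⟩ := hX Y hY hle
      obtain ⟨Z, hZz, hen⟩ := hz Y hYz
      exact ⟨Z, hZz.trans hzX, hen⟩
    · exact ⟨∅, Set.empty_subset _, hb Y hlt⟩
end

section
/- Let E = ⟨E,⊢⟩ be an event structure. (1) If E is singular and has finite conflict, then L(E) is closed under finitely consistent unions. (2) If E is singular and has binary conflict, then L(E) is closed under pairwise consistent unions. (3) If E is locally conjunctive and has finite conflict, then L(E) is closed under finitely consistent nonempty intersections. (4) If E is locally conjunctive and has binary conflict, then L(E) is closed under pairwise consistent nonempty intersections. -/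
/-- Combined properties of an event structure yield the corresponding combined
closure properties of its left-closed configuration structure. -/
theorem stmt_15 {E : Type*} (en : Set E → Set E → Prop) :
    (Singular en → ESFiniteConflict en → ClosedFinConsUnions (LeftClosed en)) ∧
    (Singular en → ESBinaryConflict en → ClosedPairwiseConsUnions (LeftClosed en)) ∧
    (LocallyConjunctive en → ESFiniteConflict en →
      ClosedFinConsNonemptyInters (LeftClosed en)) ∧
    (LocallyConjunctive en → ESBinaryConflict en →
      ClosedPairwiseConsNonemptyInters (LeftClosed en)) := by
  refine ⟨?_, ?_, ?_, ?_⟩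
  · -- singular + finite conflict
    intro hs hf A hA hfc Y hY
    by_cases hYfin : Y.Finite
    · by_cases hsing : ∃ e, Y = ({e} : Set E)
      · obtain ⟨e, rfl⟩ := hsing
        obtain ⟨X, hXA, heX⟩ := Set.mem_sUnion.mp (hY rfl)
        obtain ⟨Z, hZX, hen⟩ := hA hXA {e} (Set.singleton_subset_iff.mpr heX)
        exact ⟨Z, hZX.trans (Set.subset_sUnion_of_mem hXA), hen⟩
      · obtain ⟨z, hz, hYz⟩ := hfc Y hY hYfin
        obtain ⟨Z, _, hen⟩ := hz Y hYz
        rcases hs Z Y hen with rfl | h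
        · exact ⟨∅, Set.empty_subset _, hen⟩
        · exact absurd h hsing
    · exact ⟨∅, Set.empty_subset _, hf Y hYfin⟩
  · -- singular + binary conflict
    intro hs hf A hA hfc Y hY
    by_cases hY2 : Y.encard ≤ 2
    · by_cases hsing : ∃ e, Y = ({e} : Set E)
      · obtain ⟨e, rfl⟩ := hsing
        obtain ⟨X, hXA, heX⟩ := Set.mem_sUnion.mp (hY rfl)
        obtain ⟨Z, hZX, hen⟩ := hA hXA {e} (Set.singleton_subset_iff.mpr heX)
        exact ⟨Z, hZX.trans (Set.subset_sUnion_of_mem hXA), hen⟩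
      · obtain ⟨z, hz, hYz⟩ := hfc Y hY hY2
        obtain ⟨Z, _, hen⟩ := hz Y hYz
        rcases hs Z Y hen with rfl | h
        · exact ⟨∅, Set.empty_subset _, hen⟩
        · exact absurd h hsing
    · exact ⟨∅, Set.empty_subset _, hf Y (not_le.mp hY2)⟩
  · -- locally conjunctive + finite conflict
    intro hlc hf A hA hAne hfc Y hYI
    set B := {Z | en Z Y ∧ ∃ X ∈ A, Z ⊆ X} with hB
    have hBne : B.Nonempty := by
      obtain ⟨X, hXA⟩ := hAne
      obtain ⟨Z, hZX, hen⟩ := hA hXA Y (hYI.trans (Set.sInter_subset_of_mem hXA))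
      exact ⟨Z, hen, X, hXA, hZX⟩
    have hcon : ESCon en (⋃₀ B ∪ Y) := by
      intro W hW
      by_cases hWfin : W.Finite
      · have hWU : W ⊆ ⋃₀ A := by
          intro w hw
          rcases hW hw with h | h
          · obtain ⟨Z, ⟨_, X, hXA, hZX⟩, hwZ⟩ := h
            exact ⟨X, hXA, hZX hwZ⟩
          · obtain ⟨X, hXA⟩ := hAne
            exact ⟨X, hXA, (hYI.trans (Set.sInter_subset_of_mem hXA)) h⟩
        obtain ⟨z, hz, hWz⟩ := hfc W hWU hWfin
        obtain ⟨Z, _, hen⟩ := hz W hWz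
        exact ⟨Z, hen⟩
      · exact ⟨∅, hf W hWfin⟩
    have hmain := hlc B Y hBne (fun Z hZ => hZ.1) hcon
    refine ⟨⋂₀ B, ?_, hmain⟩
    intro x hx
    refine Set.mem_sInter.mpr fun X hXA => ?_
    obtain ⟨Z, hZX, hen⟩ := hA hXA Y (hYI.trans (Set.sInter_subset_of_mem hXA))
    exact hZX (Set.mem_sInter.mp hx Z ⟨hen, X, hXA, hZX⟩)
  · -- locally conjunctive + binary conflict
    intro hlc hf A hA hAne hfc Y hYI
    set B := {Z | en Z Y ∧ ∃ X ∈ A, Z ⊆ X} with hB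
    have hBne : B.Nonempty := by
      obtain ⟨X, hXA⟩ := hAne
      obtain ⟨Z, hZX, hen⟩ := hA hXA Y (hYI.trans (Set.sInter_subset_of_mem hXA))
      exact ⟨Z, hen, X, hXA, hZX⟩
    have hcon : ESCon en (⋃₀ B ∪ Y) := by
      intro W hW
      by_cases hW2 : W.encard ≤ 2
      · have hWU : W ⊆ ⋃₀ A := by
          intro w hw
          rcases hW hw with h | h
          · obtain ⟨Z, ⟨_, X, hXA, hZX⟩, hwZ⟩ := h
            exact ⟨X, hXA, hZX hwZ⟩
          · obtain ⟨X, hXA⟩ := hAne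
            exact ⟨X, hXA, (hYI.trans (Set.sInter_subset_of_mem hXA)) h⟩
        obtain ⟨z, hz, hWz⟩ := hfc W hWU hW2
        obtain ⟨Z, _, hen⟩ := hz W hWz
        exact ⟨Z, hen⟩
      · exact ⟨∅, hf W (not_le.mp hW2)⟩
    have hmain := hlc B Y hBne (fun Z hZ => hZ.1) hcon
    refine ⟨⋂₀ B, ?_, hmain⟩
    intro x hx
    refine Set.mem_sInter.mpr fun X hXA => ?_
    obtain ⟨Z, hZX, hen⟩ := hA hXA Y (hYI.trans (Set.sInter_subset_of_mem hXA))
    exact hZX (Set.mem_sInter.mp hx Z ⟨hen, X, hXA, hZX⟩)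
end

section
/- Let ⟨E,C⟩ be a configuration structure. (1) If C is closed under bounded unions, then there exists a pure, singular event structure ⟨E,⊢⟩ with L(⟨E,⊢⟩) = C. (2) If C is closed under pairwise consistent unions, then there exists a pure, singular event structure ⟨E,⊢⟩ with binary conflict such that L(⟨E,⊢⟩) = C. -/
private def en1Aux {E : Type*} (C : Set (Set E)) (Z Y : Set E) : Prop :=
  (∃ e, Y = {e} ∧ e ∉ Z ∧ insert e Z ∈ C) ∨
  ((¬ ∃ e, Y = {e}) ∧ Z = ∅ ∧ Consistent C Y)

private def en2Aux {E : Type*} (C : Set (Set E)) (Z Y : Set E) : Prop :=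
  (∃ e, Y = {e} ∧ e ∉ Z ∧ insert e Z ∈ C) ∨
  ((¬ ∃ e, Y = {e}) ∧ Z = ∅ ∧ (Y.encard ≤ 2 → Consistent C Y))

private lemma sUnion_eq_aux {E : Type*} (C : Set (Set E)) (X : Set E)
    (hcov : ∀ e ∈ X, ∃ W, W ∈ C ∧ e ∈ W ∧ W ⊆ X) :
    ⋃₀ {W | W ∈ C ∧ W ⊆ X} = X := by
  apply subset_antisymm
  · intro x hx
    obtain ⟨W, hW, hxW⟩ := hx
    exact hW.2 hxW
  · intro e he
    obtain ⟨W, hWC, heW, hWX⟩ := hcov e he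
    exact ⟨W, ⟨hWC, hWX⟩, heW⟩

/-- (1) Every configuration structure closed under bounded unions is the family of
left-closed configurations of a pure singular event structure. (2) Every
configuration structure closed under pairwise consistent unions is the family of
left-closed configurations of a pure singular event structure with binary
conflict. -/
theorem stmt_16 {E : Type*} (C : Set (Set E)) :
    (ClosedBoundedUnions C →
      ∃ en : Set E → Set E → Prop, PureES en ∧ Singular en ∧ LeftClosed en = C) ∧
    (ClosedPairwiseConsUnions C →
      ∃ en : Set E → Set E → Prop, PureES en ∧ Singular en ∧ ESBinaryConflict en ∧
        LeftClosed en = C) := by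

  constructor
  · intro hC
    refine ⟨en1Aux C, ?_, ?_, ?_⟩
    · rintro X Y (⟨e, rfl, heZ, -⟩ | ⟨-, rfl, -⟩)
      · ext x
        simp only [Set.mem_inter_iff, Set.mem_singleton_iff, Set.mem_empty_iff_false, iff_false,
          not_and]
        rintro hx rfl; exact heZ hx
      · simp
    · rintro X Y (⟨e, rfl, -⟩ | ⟨-, rfl, -⟩)
      · exact Or.inr ⟨e, rfl⟩
      · exact Or.inl rfl
    · ext X
      constructor
      · intro hX
        have hcov : ∀ e ∈ X, ∃ W, W ∈ C ∧ e ∈ W ∧ W ⊆ X := by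
          intro e he
          obtain ⟨Z, hZX, hZ⟩ := hX {e} (Set.singleton_subset_iff.mpr he)
          rcases hZ with ⟨e', he', heZ, hins⟩ | ⟨h, -⟩
          · obtain rfl : e = e' := Set.singleton_eq_singleton_iff.mp he'
            exact ⟨insert e Z, hins, Set.mem_insert _ _, Set.insert_subset he hZX⟩
          · exact (h ⟨e, rfl⟩).elim
        have hcons : Consistent C X := by
          by_cases hs : ∃ e, X = {e}
          · obtain ⟨e, rfl⟩ := hs
            obtain ⟨W, hWC, heW, hWX⟩ := hcov e (Set.mem_singleton e)
            exact ⟨W, hWC, Set.singleton_subset_iff.mpr heW⟩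
          · obtain ⟨Z, hZX, hZ⟩ := hX X subset_rfl
            rcases hZ with ⟨e, he, -⟩ | ⟨-, -, h⟩
            · exact absurd ⟨e, he⟩ hs
            · exact h
        have h2 := hC {W | W ∈ C ∧ W ⊆ X} (fun W hW => hW.1) ?_
        · rwa [sUnion_eq_aux C X hcov] at h2
        · rw [sUnion_eq_aux C X hcov]; exact hcons
      · intro hX Y hY
        by_cases hs : ∃ e, Y = {e}
        · obtain ⟨e, rfl⟩ := hs
          have heX : e ∈ X := hY (Set.mem_singleton e)
          refine ⟨X \ {e}, Set.diff_subset, Or.inl ⟨e, rfl, fun h => h.2 rfl, ?_⟩⟩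
          rwa [Set.insert_diff_singleton, Set.insert_eq_self.mpr heX]
        · exact ⟨∅, Set.empty_subset _, Or.inr ⟨hs, rfl, ⟨X, hX, hY⟩⟩⟩
  · intro hC
    refine ⟨en2Aux C, ?_, ?_, ?_, ?_⟩
    · rintro X Y (⟨e, rfl, heZ, -⟩ | ⟨-, rfl, -⟩)
      · ext x
        simp only [Set.mem_inter_iff, Set.mem_singleton_iff, Set.mem_empty_iff_false, iff_false,
          not_and]
        rintro hx rfl; exact heZ hx
      · simp
    · rintro X Y (⟨e, rfl, -⟩ | ⟨-, rfl, -⟩)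
      · exact Or.inr ⟨e, rfl⟩
      · exact Or.inl rfl
    · intro X hX2
      refine Or.inr ⟨?_, rfl, fun h => absurd (lt_of_lt_of_le hX2 h) (lt_irrefl _)⟩
      rintro ⟨e, rfl⟩
      rw [Set.encard_singleton] at hX2
      exact absurd hX2 (by norm_num)
    · ext X
      constructor
      · intro hX
        have hcov : ∀ e ∈ X, ∃ W, W ∈ C ∧ e ∈ W ∧ W ⊆ X := by
          intro e he
          obtain ⟨Z, hZX, hZ⟩ := hX {e} (Set.singleton_subset_iff.mpr he)
          rcases hZ with ⟨e', he', heZ, hins⟩ | ⟨h, -⟩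
          · obtain rfl : e = e' := Set.singleton_eq_singleton_iff.mp he'
            exact ⟨insert e Z, hins, Set.mem_insert _ _, Set.insert_subset he hZX⟩
          · exact (h ⟨e, rfl⟩).elim
        have hpc : PairwiseConsistent C X := by
          intro Y hYX hY2
          by_cases hs : ∃ e, Y = {e}
          · obtain ⟨e, rfl⟩ := hs
            obtain ⟨W, hWC, heW, hWX⟩ := hcov e (hYX (Set.mem_singleton e))
            exact ⟨W, hWC, Set.singleton_subset_iff.mpr heW⟩
          · obtain ⟨Z, hZX, hZ⟩ := hX Y hYX
            rcases hZ with ⟨e, he, -⟩ | ⟨-, -, h⟩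
            · exact absurd ⟨e, he⟩ hs
            · exact h hY2
        have h2 := hC {W | W ∈ C ∧ W ⊆ X} (fun W hW => hW.1) ?_
        · rwa [sUnion_eq_aux C X hcov] at h2
        · rw [sUnion_eq_aux C X hcov]; exact hpc
      · intro hX Y hY
        by_cases hs : ∃ e, Y = {e}
        · obtain ⟨e, rfl⟩ := hs
          have heX : e ∈ X := hY (Set.mem_singleton e)
          refine ⟨X \ {e}, Set.diff_subset, Or.inl ⟨e, rfl, fun h => h.2 rfl, ?_⟩⟩
          rwa [Set.insert_diff_singleton, Set.insert_eq_self.mpr heX]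
        · exact ⟨∅, Set.empty_subset _, Or.inr ⟨hs, rfl, fun _ => ⟨X, hX, hY⟩⟩⟩
end

section
/- Let ⟨E,C⟩ be a configuration structure closed under nonempty intersections. Then: (1) C is closed under directed unions if and only if it has finite conflict; (2) C is weakly coherent if and only if it is rooted and has binary conflict; (3) C is closed under finitely compatible unions if and only if it is closed under finitely consistent unions; (4) C is coherent if and only if it is rooted and closed under pairwise consistent unions. -/
lemma my_encard_le_two {α : Type*} {s : Set α} (h : s.encard ≤ 2) :
    s = ∅ ∨ (∃ a, s = {a}) ∨ ∃ a b, s = {a, b} := by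
  rcases s.eq_empty_or_nonempty with he | ⟨a, ha⟩
  · exact Or.inl he
  right
  by_cases h1 : ∀ b ∈ s, b = a
  · exact Or.inl ⟨a, Set.eq_singleton_iff_unique_mem.mpr ⟨ha, h1⟩⟩
  push_neg at h1
  obtain ⟨b, hb, hba⟩ := h1
  refine Or.inr ⟨a, b, Set.Subset.antisymm ?_ (by rintro x (rfl | rfl) <;> assumption)⟩
  intro c hc
  by_contra hc2
  simp only [Set.mem_insert_iff, Set.mem_singleton_iff, not_or] at hc2
  have hsub : ({a, b, c} : Set α) ⊆ s := by rintro x (rfl | rfl | rfl) <;> assumption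
  have h3 : ({a, b, c} : Set α).encard = 3 := by
    rw [Set.encard_insert_of_notMem (by
        simp only [Set.mem_insert_iff, Set.mem_singleton_iff]
        push_neg
        exact ⟨fun h' => hba h'.symm, fun h' => hc2.1 h'.symm⟩),
      Set.encard_insert_of_notMem (by
        simp only [Set.mem_singleton_iff]
        exact fun h' => hc2.2 h'.symm), Set.encard_singleton]
    rfl
  have := le_trans (Set.encard_mono hsub) h
  rw [h3] at this
  norm_num at this

lemma pair_encard_le_two {α : Type*} (a b : α) : ({a, b} : Set α).encard ≤ 2 :=
  le_trans (Set.encard_insert_le _ _) (by rw [Set.encard_singleton]; exact le_of_eq rfl)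

/-- In a nonempty directed family, every finite subset of the union is bounded
by a member. -/
lemma directed_bound {E : Type*} {A : Set (Set E)} (hne : A.Nonempty)
    (hdir : ∀ x ∈ A, ∀ y ∈ A, ∃ z ∈ A, x ∪ y ⊆ z) {Y : Set E}
    (hYfin : Y.Finite) (hYsub : Y ⊆ ⋃₀ A) : ∃ z ∈ A, Y ⊆ z := by
  refine Set.Finite.induction_on (motive := fun Y _ => Y ⊆ ⋃₀ A → ∃ z ∈ A, Y ⊆ z)
    Y hYfin (fun _ => hne.imp fun z hz => ⟨hz, Set.empty_subset z⟩) ?_ hYsub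
  rintro a s - - ih hsub
  obtain ⟨z, hzA, hsz⟩ := ih (fun e he => hsub (Set.mem_insert_of_mem a he))
  obtain ⟨x, hxA, hax⟩ := hsub (Set.mem_insert a s)
  obtain ⟨w, hwA, hw⟩ := hdir x hxA z hzA
  exact ⟨w, hwA, Set.insert_subset (hw (Or.inl hax)) (fun e he => hw (Or.inr (hsz he)))⟩

/-- In a nonempty directed family, every finite subfamily is bounded by a member. -/
lemma directed_fam_bound {E : Type*} {A : Set (Set E)} (hne : A.Nonempty)
    (hdir : ∀ x ∈ A, ∀ y ∈ A, ∃ z ∈ A, x ∪ y ⊆ z) {F : Set (Set E)}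
    (hFfin : F.Finite) (hFA : F ⊆ A) : ∃ z ∈ A, ⋃₀ F ⊆ z := by
  refine Set.Finite.induction_on (motive := fun F _ => F ⊆ A → ∃ z ∈ A, ⋃₀ F ⊆ z)
    F hFfin (fun _ => hne.imp fun z hz => ⟨hz, by simp⟩) ?_ hFA
  rintro x s - - ih hsub
  obtain ⟨z, hzA, hsz⟩ := ih (fun e he => hsub (Set.mem_insert_of_mem x he))
  obtain ⟨w, hwA, hw⟩ := hdir x (hsub (Set.mem_insert x s)) z hzA
  refine ⟨w, hwA, ?_⟩
  rw [Set.sUnion_insert]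
  exact Set.union_subset (fun e he => hw (Or.inl he)) (fun e he => hw (Or.inr (hsz he)))

lemma sUnion_image_inter {E : Type*} (w : Set E) (A : Set (Set E)) :
    ⋃₀ ((fun x => w ∩ x) '' A) = w ∩ ⋃₀ A := by
  ext e
  simp only [Set.mem_sUnion, Set.mem_image, Set.mem_inter_iff]
  constructor
  · rintro ⟨_, ⟨x, hxA, rfl⟩, hew, hex⟩
    exact ⟨hew, x, hxA, hex⟩
  · rintro ⟨hew, x, hxA, hex⟩
    exact ⟨w ∩ x, ⟨x, hxA, rfl⟩, hew, hex⟩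

/-- The intersection of all configurations between `Y` and `X`. -/
lemma inter_conf {E : Type*} {C : Set (Set E)} (h : ClosedNonemptyInters C)
    {X Y : Set E} (hz : ∃ z ∈ C, Y ⊆ z ∧ z ⊆ X) :
    ⋂₀ {w ∈ C | Y ⊆ w ∧ w ⊆ X} ∈ C ∧ Y ⊆ ⋂₀ {w ∈ C | Y ⊆ w ∧ w ⊆ X} ∧
      ⋂₀ {w ∈ C | Y ⊆ w ∧ w ⊆ X} ⊆ X := by
  obtain ⟨z, hzC, hYz, hzX⟩ := hz
  refine ⟨h _ (fun w hw => hw.1) ⟨z, hzC, hYz, hzX⟩, ?_, ?_⟩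
  · exact fun e he => Set.mem_sInter.mpr fun w hw => hw.2.1 he
  · exact fun e he => hzX (Set.mem_sInter.mp he z ⟨hzC, hYz, hzX⟩)

/-- For configuration structures closed under nonempty intersections:
directed-union closure ↔ finite conflict; weak coherence ↔ rooted + binary
conflict; closure under finitely compatible unions ↔ closure under finitely
consistent unions; coherence ↔ rooted + closure under pairwise consistent
unions. -/
theorem stmt_17 {E : Type*} (C : Set (Set E)) (h : ClosedNonemptyInters C) :
    (ClosedDirectedUnions C ↔ CSFiniteConflict C) ∧
    (WeaklyCoherent C ↔ Rooted C ∧ CSBinaryConflict C) ∧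
    (ClosedFinCompatUnions C ↔ ClosedFinConsUnions C) ∧
    (Coherent C ↔ Rooted C ∧ ClosedPairwiseConsUnions C) := by
  have p1 : ClosedDirectedUnions C ↔ CSFiniteConflict C := by
    constructor
    · intro hd X hX
      set S : Set E → Set (Set E) := fun Y => {w ∈ C | Y ⊆ w ∧ w ⊆ X} with hS
      set A : Set (Set E) := {z | ∃ Y : Set E, Y.Finite ∧ Y ⊆ X ∧ z = ⋂₀ S Y} with hA
      have hm : ∀ Y : Set E, Y ⊆ X → Y.Finite →
          ⋂₀ S Y ∈ C ∧ Y ⊆ ⋂₀ S Y ∧ ⋂₀ S Y ⊆ X :=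
        fun Y hYX hYfin => inter_conf h (hX Y hYX hYfin)
      have hAC : A ⊆ C := by
        rintro z ⟨Y, hf, hs, rfl⟩
        exact (hm Y hs hf).1
      have hAne : A.Nonempty := ⟨⋂₀ S ∅, ∅, Set.finite_empty, Set.empty_subset X, rfl⟩
      have hdir : ∀ x ∈ A, ∀ y ∈ A, ∃ z ∈ A, x ∪ y ⊆ z := by
        rintro _ ⟨Y₁, hf₁, hs₁, rfl⟩ _ ⟨Y₂, hf₂, hs₂, rfl⟩
        refine ⟨⋂₀ S (Y₁ ∪ Y₂),
          ⟨Y₁ ∪ Y₂, hf₁.union hf₂, Set.union_subset hs₁ hs₂, rfl⟩, ?_⟩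
        intro e he
        refine Set.mem_sInter.mpr fun w hw => ?_
        have hw₁ : w ∈ S Y₁ := ⟨hw.1, fun a ha => hw.2.1 (Or.inl ha), hw.2.2⟩
        have hw₂ : w ∈ S Y₂ := ⟨hw.1, fun a ha => hw.2.1 (Or.inr ha), hw.2.2⟩
        rcases he with he | he
        · exact Set.mem_sInter.mp he w hw₁
        · exact Set.mem_sInter.mp he w hw₂
      have hU : ⋃₀ A = X := by
        apply Set.Subset.antisymm
        · rintro e ⟨z, ⟨Y, hf, hs, rfl⟩, he⟩
          exact (hm Y hs hf).2.2 he
        · intro e he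
          exact ⟨⋂₀ S {e}, ⟨{e}, Set.finite_singleton e,
            Set.singleton_subset_iff.mpr he, rfl⟩,
            (hm {e} (Set.singleton_subset_iff.mpr he) (Set.finite_singleton e)).2.1 rfl⟩
      rw [← hU]
      exact hd A hAC hAne hdir
    · intro hfc A hA hne hdir
      apply hfc
      intro Y hY hYfin
      obtain ⟨z, hzA, hYz⟩ := directed_bound hne hdir hYfin hY
      exact ⟨z, hA hzA, hYz, Set.subset_sUnion_of_mem hzA⟩
  have p2 : WeaklyCoherent C ↔ Rooted C ∧ CSBinaryConflict C := by
    constructor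
    · intro hwc
      have hroot : Rooted C := by
        have := hwc ∅ (Set.empty_subset C) (fun x hx => hx.elim)
        rwa [Set.sUnion_empty] at this
      refine ⟨hroot, ?_⟩
      intro X hX
      set S : E → Set (Set E) := fun e => {w ∈ C | e ∈ w ∧ w ⊆ X} with hS
      have hm : ∀ e ∈ X, ⋂₀ S e ∈ C ∧ e ∈ ⋂₀ S e ∧ ⋂₀ S e ⊆ X := by
        intro e he
        obtain ⟨z, hzC, hz1, hz2⟩ := hX {e} (Set.singleton_subset_iff.mpr he)
          ((Set.encard_singleton e) ▸ one_le_two)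
        refine ⟨h _ (fun w hw => hw.1) ⟨z, hzC, hz1 rfl, hz2⟩, ?_, ?_⟩
        · exact Set.mem_sInter.mpr fun w hw => hw.2.1
        · exact fun a ha => hz2 (Set.mem_sInter.mp ha z ⟨hzC, hz1 rfl, hz2⟩)
      set A : Set (Set E) := (fun e => ⋂₀ S e) '' X with hA
      have hAC : A ⊆ C := by
        rintro _ ⟨e, he, rfl⟩
        exact (hm e he).1
      have hU : ⋃₀ A = X := by
        apply Set.Subset.antisymm
        · rintro a ⟨z, ⟨e, he, rfl⟩, ha⟩
          exact (hm e he).2.2 ha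
        · intro e he
          exact ⟨⋂₀ S e, ⟨e, he, rfl⟩, (hm e he).2.1⟩
      have hprem : ∀ x ∈ A, ∀ y ∈ A, ∃ z ∈ C, x ∪ y ⊆ z ∧ z ⊆ ⋃₀ A := by
        rintro _ ⟨e, he, rfl⟩ _ ⟨f, hf, rfl⟩
        obtain ⟨w, hwC, hw1, hw2⟩ := hX {e, f}
          (by rintro a (rfl | rfl) <;> assumption) (pair_encard_le_two e f)
        have hwe : w ∈ S e := ⟨hwC, hw1 (Or.inl rfl), hw2⟩
        have hwf : w ∈ S f := ⟨hwC, hw1 (Or.inr rfl), hw2⟩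
        refine ⟨w, hwC, Set.union_subset (Set.sInter_subset_of_mem hwe)
          (Set.sInter_subset_of_mem hwf), ?_⟩
        rw [hU]
        exact hw2
      have := hwc A hAC hprem
      rwa [hU] at this
    · rintro ⟨hroot, hbc⟩ A hA hp
      apply hbc
      intro Y hYsub hY2
      rcases my_encard_le_two hY2 with rfl | ⟨e, rfl⟩ | ⟨e, f, rfl⟩
      · exact ⟨∅, hroot, subset_rfl, Set.empty_subset _⟩
      · obtain ⟨x, hxA, hex⟩ := hYsub rfl
        exact ⟨x, hA hxA, Set.singleton_subset_iff.mpr hex, Set.subset_sUnion_of_mem hxA⟩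
      · obtain ⟨x, hxA, hex⟩ := hYsub (Or.inl rfl)
        obtain ⟨y, hyA, hfy⟩ := hYsub (Or.inr rfl)
        obtain ⟨z, hzC, hz1, hz2⟩ := hp x hxA y hyA
        refine ⟨z, hzC, ?_, hz2⟩
        rintro a (rfl | rfl)
        exacts [hz1 (Or.inl hex), hz1 (Or.inr hfy)]
  have p3 : ClosedFinCompatUnions C ↔ ClosedFinConsUnions C := by
    constructor
    · intro hfc
      have hd : ClosedDirectedUnions C := by
        intro A hA hne hdir
        apply hfc A hA
        intro F hF hFfin
        obtain ⟨z, hzA, hFz⟩ := directed_fam_bound hne hdir hFfin hF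
        exact ⟨z, hA hzA, hFz⟩
      have hconf := p1.mp hd
      intro A hA hcons
      apply hconf
      intro Y hY hYfin
      obtain ⟨w, hwC, hYw⟩ := hcons Y hY hYfin
      set F : Set (Set E) := (fun x => w ∩ x) '' A with hF
      have hFC : F ⊆ C := by
        rintro _ ⟨x, hxA, rfl⟩
        show w ∩ x ∈ C
        rw [← Set.sInter_pair w x]
        exact h {w, x} (by rintro v (rfl | rfl); exacts [hwC, hA hxA]) ⟨w, Or.inl rfl⟩
      have hFw : ∀ x ∈ F, x ⊆ w := by
        rintro _ ⟨x, hxA, rfl⟩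
        exact Set.inter_subset_left
      have hFU : ⋃₀ F ∈ C := by
        apply hfc F hFC
        intro G hG _
        exact ⟨w, hwC, fun e ⟨z, hzG, hez⟩ => hFw z (hG hzG) hez⟩
      refine ⟨⋃₀ F, hFU, ?_, ?_⟩
      · rw [hF, sUnion_image_inter]
        exact fun e he => ⟨hYw he, hY he⟩
      · rw [hF, sUnion_image_inter]
        exact Set.inter_subset_right
    · intro hfcons A hA hprem
      apply hfcons A hA
      intro Y hY hYfin
      have hch : ∀ e ∈ Y, ∃ x, x ∈ A ∧ e ∈ x := fun e he =>
        let ⟨x, hx, hex⟩ := hY he; ⟨x, hx, hex⟩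
      choose! g hg1 hg2 using hch
      obtain ⟨z, hzC, hsub⟩ := hprem (g '' Y)
        (by rintro _ ⟨e, he, rfl⟩; exact hg1 e he) (hYfin.image g)
      exact ⟨z, hzC, fun e he => hsub ⟨g e, ⟨e, he, rfl⟩, hg2 e he⟩⟩
  have p4 : Coherent C ↔ Rooted C ∧ ClosedPairwiseConsUnions C := by
    constructor
    · intro hco
      have hwc : WeaklyCoherent C := fun A hA hp => hco A hA (fun x hx y hy =>
        let ⟨z, hz, h1, _⟩ := hp x hx y hy; ⟨z, hz, h1⟩)
      obtain ⟨hroot, hbc⟩ := p2.mp hwc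
      refine ⟨hroot, ?_⟩
      intro A hA hpc
      apply hbc
      intro Y hY hY2
      obtain ⟨w, hwC, hYw⟩ := hpc Y hY hY2
      set F : Set (Set E) := (fun x => w ∩ x) '' A with hF
      have hFC : F ⊆ C := by
        rintro _ ⟨x, hxA, rfl⟩
        show w ∩ x ∈ C
        rw [← Set.sInter_pair w x]
        exact h {w, x} (by rintro v (rfl | rfl); exacts [hwC, hA hxA]) ⟨w, Or.inl rfl⟩
      have hFw : ∀ x ∈ F, x ⊆ w := by
        rintro _ ⟨x, hxA, rfl⟩
        exact Set.inter_subset_left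
      have hFU : ⋃₀ F ∈ C := by
        apply hco F hFC
        intro x₁ hx₁ x₂ hx₂
        exact ⟨w, hwC, Set.union_subset (hFw x₁ hx₁) (hFw x₂ hx₂)⟩
      refine ⟨⋃₀ F, hFU, ?_, ?_⟩
      · rw [hF, sUnion_image_inter]
        exact fun e he => ⟨hYw he, hY he⟩
      · rw [hF, sUnion_image_inter]
        exact Set.inter_subset_right
    · rintro ⟨hroot, hpcu⟩ A hA hprem
      apply hpcu A hA
      intro Y hYsub hY2
      rcases my_encard_le_two hY2 with rfl | ⟨e, rfl⟩ | ⟨e, f, rfl⟩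
      · exact ⟨∅, hroot, subset_rfl⟩
      · obtain ⟨x, hxA, hex⟩ := hYsub rfl
        exact ⟨x, hA hxA, Set.singleton_subset_iff.mpr hex⟩
      · obtain ⟨x, hxA, hex⟩ := hYsub (Or.inl rfl)
        obtain ⟨y, hyA, hfy⟩ := hYsub (Or.inr rfl)
        obtain ⟨z, hzC, hz1⟩ := hprem x hxA y hyA
        refine ⟨z, hzC, ?_⟩
        rintro a (rfl | rfl)
        exacts [hz1 (Or.inl hex), hz1 (Or.inr hfy)]
  exact ⟨p1, p2, p3, p4⟩
end

section
/- A configuration structure is closed under finitely compatible unions if and only if it is closed under bounded unions and under directed unions. Likewise, a configuration structure is coherent if and only if it is closed under bounded unions and weakly coherent. -/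

private lemma directed_finite_bound {E : Type*} {A : Set (Set E)} (hne : A.Nonempty)
    (hdir : ∀ x ∈ A, ∀ y ∈ A, ∃ z ∈ A, x ∪ y ⊆ z) :
    ∀ F : Set (Set E), F.Finite → F ⊆ A → ∃ z ∈ A, ⋃₀ F ⊆ z := by
  intro F hFfin
  refine Set.Finite.induction_on (motive := fun F _ => F ⊆ A → ∃ z ∈ A, ⋃₀ F ⊆ z) F hFfin ?_ ?_
  · intro _
    obtain ⟨x, hx⟩ := hne
    exact ⟨x, hx, by simp⟩
  · intro a s _ _ ih hF
    obtain ⟨z, hz, hzs⟩ := ih ((Set.subset_insert a s).trans hF)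
    obtain ⟨w, hw, hww⟩ := hdir a (hF (Set.mem_insert a s)) z hz
    refine ⟨w, hw, ?_⟩
    rw [Set.sUnion_insert]
    exact Set.union_subset (Set.subset_union_left.trans hww)
      (hzs.trans (Set.subset_union_right.trans hww))

/-- Closure under finitely compatible unions is equivalent to closure under bounded
unions together with closure under directed unions; coherence is equivalent to
closure under bounded unions together with weak coherence. -/
theorem stmt_18 {E : Type*} (C : Set (Set E)) :
    (ClosedFinCompatUnions C ↔ ClosedBoundedUnions C ∧ ClosedDirectedUnions C) ∧
    (Coherent C ↔ ClosedBoundedUnions C ∧ WeaklyCoherent C) := by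

  constructor
  · constructor
    · intro h
      constructor
      · -- bounded
        intro A hA hcon
        exact h A hA (fun F hF _ => ⟨hcon.choose, hcon.choose_spec.1,
          (Set.sUnion_mono hF).trans hcon.choose_spec.2⟩)
      · -- directed
        intro A hA hne hdir
        apply h A hA
        intro F hF hFfin
        -- show ⋃₀ F bounded by an element of A
        obtain ⟨z, hz, hzs⟩ := directed_finite_bound hne hdir F hFfin hF
        exact ⟨z, hA hz, hzs⟩
    · rintro ⟨hb, hd⟩ A hA h
      rcases Set.eq_empty_or_nonempty A with rfl | hne
      · exact hb ∅ (Set.empty_subset _) (h ∅ subset_rfl Set.finite_empty)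
      · set D : Set (Set E) := {y | ∃ F, F ⊆ A ∧ F.Finite ∧ y = ⋃₀ F} with hD
        have hDC : D ⊆ C := by
          rintro y ⟨F, hF, hFfin, rfl⟩
          exact hb F (hF.trans hA) (h F hF hFfin)
        have hUD : ⋃₀ D = ⋃₀ A := by
          apply Set.Subset.antisymm
          · apply Set.sUnion_subset
            rintro y ⟨F, hF, hFfin, rfl⟩
            exact Set.sUnion_mono hF
          · apply Set.sUnion_subset
            intro x hx
            exact Set.subset_sUnion_of_mem ⟨{x}, Set.singleton_subset_iff.2 hx,
              Set.finite_singleton x, (Set.sUnion_singleton x).symm⟩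
        have := hd D hDC ⟨⋃₀ {hne.choose}, {hne.choose},
            Set.singleton_subset_iff.2 hne.choose_spec, Set.finite_singleton _, rfl⟩
          (by
            rintro x ⟨F, hF, hFfin, rfl⟩ y ⟨G, hG, hGfin, rfl⟩
            refine ⟨⋃₀ (F ∪ G), ⟨F ∪ G, Set.union_subset hF hG, hFfin.union hGfin, rfl⟩, ?_⟩
            rw [Set.sUnion_union])
        rwa [hUD] at this
  · constructor
    · intro h
      constructor
      · intro A hA hcon
        exact h A hA (fun x hx y hy => ⟨hcon.choose, hcon.choose_spec.1,
          Set.union_subset ((Set.subset_sUnion_of_mem hx).trans hcon.choose_spec.2)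
            ((Set.subset_sUnion_of_mem hy).trans hcon.choose_spec.2)⟩)
      · intro A hA hw
        apply h A hA
        intro x hx y hy
        obtain ⟨z, hz, hxy, _⟩ := hw x hx y hy
        exact ⟨z, hz, hxy⟩
    · rintro ⟨hb, hw⟩ A hA h
      apply hw A hA
      intro x hx y hy
      have hxyC : x ∪ y ∈ C := by
        have := hb {x, y} (by rintro z (rfl | rfl) <;> [exact hA hx; exact hA hy])
          (by rw [Set.sUnion_pair]; exact h x hx y hy)
        rwa [Set.sUnion_pair] at this
      exact ⟨x ∪ y, hxyC, subset_rfl,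
        Set.union_subset (Set.subset_sUnion_of_mem hx) (Set.subset_sUnion_of_mem hy)⟩
end

section
/- A configuration structure ⟨E,C⟩ is Horn clause axiomatisable (i.e. C is the set of common models of a set of clauses X ⇒ Y with X finite and Y a singleton) if and only if C is closed under arbitrary intersections (including the empty intersection, so that E ∈ C) and under directed unions. Moreover, ⟨E,C⟩ is Scott clause axiomatisable (i.e. C is the set of common models of a set of clauses X ⇒ Y with both X and Y finite) if and only if C is a closed subset of 𝒫(E) in the product topology, where 𝒫(E) is identified with the E-fold power of the discrete two-point space. -/
/-- A finite subset of a directed union is contained in a member. -/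
lemma finite_subset_directed {E : Type*} {A : Set (Set E)} (hne : A.Nonempty)
    (hdir : ∀ x ∈ A, ∀ y ∈ A, ∃ z ∈ A, x ∪ y ⊆ z) {X : Set E} (hX : X.Finite) :
    X ⊆ ⋃₀ A → ∃ z ∈ A, X ⊆ z := by
  refine Set.Finite.induction_on (motive := fun X _ => X ⊆ ⋃₀ A → ∃ z ∈ A, X ⊆ z) X hX ?_ ?_
  · intro _
    obtain ⟨z, hz⟩ := hne
    exact ⟨z, hz, by simp⟩
  · intro a s _ _ ih hsub
    obtain ⟨z, hz, hsz⟩ := ih fun x hx => hsub (Set.mem_insert_of_mem _ hx)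
    obtain ⟨w, hw, haw⟩ := hsub (Set.mem_insert a s)
    obtain ⟨u, hu, huu⟩ := hdir z hz w hw
    exact ⟨u, hu, Set.insert_subset (huu (Or.inr haw)) fun x hx => huu (Or.inl (hsz hx))⟩

/-- A configuration structure is Horn clause axiomatisable (clauses with finite
antecedent and a single consequent) iff it is closed under arbitrary intersections
(with `⋂∅ = E`) and under directed unions; and it is Scott clause axiomatisable
(clauses with finite antecedent and finite consequent) iff it is closed in the
product topology on `𝒫(E)`, identified with the `E`-fold power `E → Bool` of the
discrete two-point space. -/
theorem stmt_19 {E : Type*} (C : Set (Set E)) :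
    ((∃ T : Set (Set E × Set E),
        (∀ c ∈ T, c.1.Finite ∧ ∃ e, c.2 = {e}) ∧ C = Models T) ↔
      (∀ A ⊆ C, ⋂₀ A ∈ C) ∧ ClosedDirectedUnions C) ∧
    ((∃ T : Set (Set E × Set E),
        (∀ c ∈ T, c.1.Finite ∧ c.2.Finite) ∧ C = Models T) ↔
      IsClosed {f : E → Bool | {e | f e = true} ∈ C}) := by
  classical
  constructor
  · constructor
    · rintro ⟨T, hT, rfl⟩
      constructor
      · intro A hA c hc hsub
        obtain ⟨-, e, he⟩ := hT c hc
        refine ⟨e, ?_, by rw [he]; rfl⟩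
        intro m hm
        obtain ⟨x, hx1, hx2⟩ := hA hm c hc (hsub.trans (Set.sInter_subset_of_mem hm))
        rw [he, Set.mem_singleton_iff] at hx2
        exact hx2 ▸ hx1
      · intro A hA hne hdir c hc hsub
        obtain ⟨hfin, e, he⟩ := hT c hc
        obtain ⟨z, hz, hcz⟩ := finite_subset_directed hne hdir hfin hsub
        obtain ⟨x, hx1, hx2⟩ := hA hz c hc hcz
        exact ⟨x, Set.mem_sUnion.2 ⟨z, hz, hx1⟩, hx2⟩
    · rintro ⟨hInt, hDir⟩
      refine ⟨{c | c.1.Finite ∧ (∃ e, c.2 = {e}) ∧ ∀ m ∈ C, c.1 ⊆ m → (m ∩ c.2).Nonempty},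
        fun c hc => ⟨hc.1, hc.2.1⟩, ?_⟩
      apply Set.Subset.antisymm
      · intro m hm c hc hsub
        exact hc.2.2 m hm hsub
      · intro m hm
        -- closure operator
        set cl : Set E → Set E := fun X => ⋂₀ {c ∈ C | X ⊆ c} with hcl
        have hclC : ∀ X, cl X ∈ C := fun X => hInt _ (Set.sep_subset _ _)
        have hclm : ∀ X : Set E, X.Finite → X ⊆ m → cl X ⊆ m := by
          intro X hfin hXm e he
          have : (X, ({e} : Set E)) ∈
              {c : Set E × Set E | c.1.Finite ∧ (∃ e, c.2 = {e}) ∧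
                ∀ m ∈ C, c.1 ⊆ m → (m ∩ c.2).Nonempty} := by
            exact ⟨hfin, ⟨e, rfl⟩, fun n hn hXn =>
              ⟨e, Set.mem_sInter.1 he n ⟨hn, hXn⟩, rfl⟩⟩
          obtain ⟨x, hx1, hx2⟩ := hm _ this hXm
          rw [Set.mem_singleton_iff] at hx2
          exact hx2 ▸ hx1
        set A : Set (Set E) := cl '' {X | X ⊆ m ∧ X.Finite} with hA
        have hAC : A ⊆ C := by rintro _ ⟨X, -, rfl⟩; exact hclC X
        have hAne : A.Nonempty := ⟨cl ∅, ⟨∅, ⟨Set.empty_subset m, Set.finite_empty⟩, rfl⟩⟩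
        have hmono : ∀ X Y : Set E, X ⊆ Y → cl X ⊆ cl Y := fun X Y hXY x hx =>
          Set.mem_sInter.2 fun c hc => Set.mem_sInter.1 hx c ⟨hc.1, hXY.trans hc.2⟩
        have hAdir : ∀ x ∈ A, ∀ y ∈ A, ∃ z ∈ A, x ∪ y ⊆ z := by
          rintro _ ⟨X, ⟨hX1, hX2⟩, rfl⟩ _ ⟨Y, ⟨hY1, hY2⟩, rfl⟩
          refine ⟨cl (X ∪ Y), ⟨X ∪ Y, ⟨Set.union_subset hX1 hY1, hX2.union hY2⟩, rfl⟩, ?_⟩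
          exact Set.union_subset (hmono _ _ Set.subset_union_left)
            (hmono _ _ Set.subset_union_right)
        have hunion : ⋃₀ A = m := by
          apply Set.Subset.antisymm
          · rintro x ⟨_, ⟨X, ⟨hX1, hX2⟩, rfl⟩, hx⟩
            exact hclm X hX2 hX1 hx
          · intro e he
            exact ⟨cl {e}, ⟨{e}, ⟨Set.singleton_subset_iff.2 he, Set.finite_singleton e⟩, rfl⟩,
              Set.mem_sInter.2 fun c hc => hc.2 rfl⟩
        rw [← hunion]
        exact hDir A hAC hAne hAdir
  · constructor
    · rintro ⟨T, hT, rfl⟩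
      have : {f : E → Bool | {e | f e = true} ∈ Models T} =
          ⋂ c ∈ T, {f : E → Bool | c.1 ⊆ {e | f e = true} →
            ({e | f e = true} ∩ c.2).Nonempty} := by
        ext f; simp [Models]
      rw [this]
      refine isClosed_biInter fun c hc => ?_
      rw [← isOpen_compl_iff]
      have hcompl : {f : E → Bool | c.1 ⊆ {e | f e = true} →
            ({e | f e = true} ∩ c.2).Nonempty}ᶜ =
          (⋂ e ∈ c.1, {f : E → Bool | f e = true}) ∩
            ⋂ e ∈ c.2, {f : E → Bool | f e = false} := by
        ext f
        simp only [Set.mem_compl_iff, Set.mem_setOf_eq, Classical.not_imp, Set.mem_inter_iff,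
          Set.mem_iInter, Set.not_nonempty_iff_eq_empty]
        constructor
        · rintro ⟨h1, h2⟩
          refine ⟨fun e he => h1 he, fun e he => ?_⟩
          have : f e ≠ true := fun h => (Set.eq_empty_iff_forall_notMem.1 h2 e) ⟨h, he⟩
          simpa using this
        · rintro ⟨h1, h2⟩
          refine ⟨fun e he => h1 e he, Set.eq_empty_iff_forall_notMem.2 ?_⟩
          rintro e ⟨he1, he2⟩
          simp only [Set.mem_setOf_eq, h2 e he2] at he1
          exact Bool.false_ne_true he1
      rw [hcompl]
      refine IsOpen.inter ((hT c hc).1.isOpen_biInter fun e _ => ?_)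
        ((hT c hc).2.isOpen_biInter fun e _ => ?_)
      · have h : {f : E → Bool | f e = true} = (fun f : E → Bool => f e) ⁻¹' {true} := by
          ext f; simp
        rw [h]; exact IsOpen.preimage (continuous_apply e) (isOpen_discrete _)
      · have h : {f : E → Bool | f e = false} = (fun f : E → Bool => f e) ⁻¹' {false} := by
          ext f; simp
        rw [h]; exact IsOpen.preimage (continuous_apply e) (isOpen_discrete _)
    · intro hclosed
      set S : Set (E → Bool) := {f | {e | f e = true} ∈ C} with hS
      set χ : Set E → E → Bool := fun m e => decide (e ∈ m) with hχ
      have hχm : ∀ m : Set E, {e | χ m e = true} = m := by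
        intro m; ext e; simp [hχ]
      have hmem : ∀ m : Set E, m ∈ C ↔ χ m ∈ S := by
        intro m; rw [hS, Set.mem_setOf_eq, hχm]
      set T : Set (Set E × Set E) :=
        {c | c.1.Finite ∧ c.2.Finite ∧ ∀ m ∈ C, c.1 ⊆ m → (m ∩ c.2).Nonempty} with hTdef
      refine ⟨T, fun c hc => ⟨hc.1, hc.2.1⟩, ?_⟩
      apply Set.Subset.antisymm
      · intro m hm c hc hsub
        exact hc.2.2 m hm hsub
      · intro m hm
        by_contra hmC
        have hopen : IsOpen Sᶜ := hclosed.isOpen_compl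
        have hfS : χ m ∈ Sᶜ := fun h => hmC ((hmem m).2 h)
        obtain ⟨I, u, hu, hpi⟩ := isOpen_pi_iff.1 hopen (χ m) hfS
        -- the cylinder of agreement with χ m on I is inside Sᶜ
        have hcyl : ∀ g : E → Bool, (∀ e ∈ I, g e = χ m e) → g ∈ Sᶜ := by
          intro g hg
          apply hpi
          intro e he
          rw [hg e he]
          exact (hu e he).2
        have hcT : ((↑I ∩ m : Set E), (↑I \ m : Set E)) ∈ T := by
          refine ⟨(I.finite_toSet).inter_of_left m, (I.finite_toSet).sdiff (t := m), ?_⟩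
          intro n hn hsubn
          by_contra hemp
          rw [Set.not_nonempty_iff_eq_empty] at hemp
          have hagree : ∀ e ∈ I, χ n e = χ m e := by
            intro e he
            by_cases hem : e ∈ m
            · have : e ∈ n := hsubn ⟨he, hem⟩
              simp [hχ, this, hem]
            · have : e ∉ n := fun h =>
                (Set.eq_empty_iff_forall_notMem.1 hemp e) ⟨h, he, hem⟩
              simp [hχ, this, hem]
          exact hcyl (χ n) hagree ((hmem n).1 hn)
        have := hm _ hcT (Set.inter_subset_right)
        obtain ⟨x, hx1, hx2⟩ := this
        exact hx2.2 hx1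
end
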